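/- Let ω be a semi-selforthogonal subcategory of a triangulated category T that is functorially finite in T. Then ω⊥ equals the co-Auslander class ωX, and ⊥ω equals the Auslander class X_ω. -/

import Mathlib

open CategoryTheory Category Limits Pretriangulated

universe v u

namespace RelSing

variable {C : Type u} [Category.{v} C] [Preadditive C] [HasZeroObject C]
  [HasShift C ℤ] [∀ n : ℤ, (shiftFunctor C n).Additive] [Pretriangulated C]

/-- `ω` is semi-selforthogonal (presilting): `Hom(M, M'[i]) = 0` for `M, M' ∈ ω`, `i > 0`. -/
def SemiSelfOrth (ω : Set C) : Prop :=
  ∀ M ∈ ω, ∀ M' ∈ ω, ∀ i : ℤ, 0 < i → ∀ f : M ⟶ M'⟦i⟧, f = 0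

/-- `add ω`: closure of `ω` under zero objects, finite direct sums (expressed via
biproduct data) and direct summands (retracts). -/
inductive AddCat (ω : Set C) : C → Prop
  | of {X : C} (hX : X ∈ ω) : AddCat ω X
  | zero {X : C} (hX : IsZero X) : AddCat ω X
  | sum {X Y Z : C} (i₁ : X ⟶ Z) (i₂ : Y ⟶ Z) (p₁ : Z ⟶ X) (p₂ : Z ⟶ Y)
      (h₁ : i₁ ≫ p₁ = 𝟙 X) (h₂ : i₂ ≫ p₂ = 𝟙 Y) (h₁₂ : i₁ ≫ p₂ = 0) (h₂₁ : i₂ ≫ p₁ = 0)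
      (hZ : p₁ ≫ i₁ + p₂ ≫ i₂ = 𝟙 Z) (hX : AddCat ω X) (hY : AddCat ω Y) : AddCat ω Z
  | retract {X Y : C} (i : X ⟶ Y) (r : Y ⟶ X) (hir : i ≫ r = 𝟙 X) (hY : AddCat ω Y) :
      AddCat ω X

/-- The left orthogonal `⊥ω`. -/
def leftPerp (ω : Set C) : Set C :=
  {N | ∀ M ∈ ω, ∀ i : ℤ, 0 < i → ∀ f : N ⟶ M⟦i⟧, f = 0}

/-- The right orthogonal `ω⊥`. -/
def rightPerp (ω : Set C) : Set C :=
  {N | ∀ M ∈ ω, ∀ i : ℤ, 0 < i → ∀ f : M ⟶ N⟦i⟧, f = 0}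

/-- The Auslander class `X_ω`: objects `T₀` with triangles `T_i → M_i → T_{i+1} → T_i[1]`
for all `i ≥ 0`, `M_i ∈ add ω`, `T_i ∈ ⊥ω`. -/
def Auslander (ω : Set C) : Set C :=
  {X | ∃ (T : ℕ → C) (M : ℕ → C) (f : ∀ i, T i ⟶ M i) (g : ∀ i, M i ⟶ T (i + 1))
      (h : ∀ i, T (i + 1) ⟶ (T i)⟦(1 : ℤ)⟧),
    T 0 = X ∧ (∀ i, Triangle.mk (f i) (g i) (h i) ∈ distTriang C) ∧
      (∀ i, AddCat ω (M i)) ∧ (∀ i, T i ∈ leftPerp ω)}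

/-- The co-Auslander class `ωX`: objects `T₀` with triangles `T_{i+1} → M_i → T_i → T_{i+1}[1]`
for all `i ≥ 0`, `M_i ∈ add ω`, `T_i ∈ ω⊥`. -/
def coAuslander (ω : Set C) : Set C :=
  {X | ∃ (T : ℕ → C) (M : ℕ → C) (f : ∀ i, T (i + 1) ⟶ M i) (g : ∀ i, M i ⟶ T i)
      (h : ∀ i, T i ⟶ (T (i + 1))⟦(1 : ℤ)⟧),
    T 0 = X ∧ (∀ i, Triangle.mk (f i) (g i) (h i) ∈ distTriang C) ∧
      (∀ i, AddCat ω (M i)) ∧ (∀ i, T i ∈ rightPerp ω)}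

/-- `check S` (`S̬`): objects `X₀` with triangles `X_i → C_i → X_{i+1} → X_i[1]` for
`0 ≤ i ≤ r`, `C_i ∈ S`, `X_{r+1} = 0`. -/
def CheckClass (S : Set C) : Set C :=
  {X | ∃ (r : ℕ) (T : ℕ → C) (M : ℕ → C) (f : ∀ i, T i ⟶ M i) (g : ∀ i, M i ⟶ T (i + 1))
      (h : ∀ i, T (i + 1) ⟶ (T i)⟦(1 : ℤ)⟧),
    T 0 = X ∧ IsZero (T (r + 1)) ∧ (∀ i ≤ r, Triangle.mk (f i) (g i) (h i) ∈ distTriang C) ∧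
      (∀ i ≤ r, M i ∈ S)}

/-- `hat S` (`Ŝ`): objects `X₀` with triangles `X_{i+1} → C_i → X_i → X_{i+1}[1]` for
`0 ≤ i ≤ r`, `C_i ∈ S`, `X_{r+1} = 0`. -/
def HatClass (S : Set C) : Set C :=
  {X | ∃ (r : ℕ) (T : ℕ → C) (M : ℕ → C) (f : ∀ i, T (i + 1) ⟶ M i) (g : ∀ i, M i ⟶ T i)
      (h : ∀ i, T i ⟶ (T (i + 1))⟦(1 : ℤ)⟧),
    T 0 = X ∧ IsZero (T (r + 1)) ∧ (∀ i ≤ r, Triangle.mk (f i) (g i) (h i) ∈ distTriang C) ∧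
      (∀ i ≤ r, M i ∈ S)}

/-- A (strictly full) triangulated subcategory, as a predicate on sets of objects. -/
structure IsTriangulatedSub (S : Set C) : Prop where
  zero : ∀ X : C, IsZero X → X ∈ S
  iso : ∀ {X Y : C}, (X ≅ Y) → X ∈ S → Y ∈ S
  shift : ∀ X ∈ S, ∀ n : ℤ, X⟦n⟧ ∈ S
  ext₂ : ∀ T ∈ distTriang C, T.obj₁ ∈ S → T.obj₃ ∈ S → T.obj₂ ∈ S

/-- `⟨S⟩`: the smallest triangulated subcategory containing `S`. -/
def genTriang (S : Set C) : Set C :=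
  ⋂₀ {U : Set C | S ⊆ U ∧ IsTriangulatedSub U}

/-- `S[+] = {X | X ≅ C[n], C ∈ S, n ≥ 0}`. -/
def plusClass (S : Set C) : Set C :=
  {X | ∃ Y ∈ S, ∃ n : ℕ, Nonempty (X ≅ Y⟦(n : ℤ)⟧)}

/-- `S[-] = {X | X ≅ C[n], C ∈ S, n ≤ 0}`. -/
def minusClass (S : Set C) : Set C :=
  {X | ∃ Y ∈ S, ∃ n : ℕ, Nonempty (X ≅ Y⟦(-(n : ℤ))⟧)}

/-- `f` factors through an object of `add ω`. -/
def FactorsThruAdd (ω : Set C) {X Y : C} (f : X ⟶ Y) : Prop :=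
  ∃ (M : C) (g : X ⟶ M) (h : M ⟶ Y), AddCat ω M ∧ g ≫ h = f

/-- The `ω`-Gorenstein objects: `G_ω = ωX ∩ X_ω`. -/
def Gor (ω : Set C) : Set C := coAuslander ω ∩ Auslander ω


end RelSing

/-! Given `N ∈ ω⊥`, complete a right `add ω`-approximation `M → N` to a triangle
`T' → M → N → T'[1]`. Then `T' ∈ ω⊥`: a map `W → T'[i]` with `W ∈ ω` and `i > 0` vanishes in
`M[i]` by semi-selforthogonality, so it comes from a map `W → N[i-1]`. For `i > 1` that map is
zero because `N ∈ ω⊥`; for `i = 1` it factors through `M → N`, and `M → N → T'[1]` is zero.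
Iterating gives the resolution exhibiting `N ∈ ωX`, while `ωX ⊆ ω⊥` holds because `T₀ ∈ ω⊥`.
The statement for `⊥ω` is dual, with left approximations and cones. -/

namespace RelSing

section Preadditive

variable {C : Type u} [Category.{v} C] [Preadditive C] {ω : Set C}

def IsRightApprox (ω : Set C) {M X : C} (f : M ⟶ X) : Prop :=
  AddCat ω M ∧ ∀ M' : C, AddCat ω M' → ∀ g : M' ⟶ X, ∃ h : M' ⟶ M, h ≫ f = g

def IsLeftApprox (ω : Set C) {X M : C} (f : X ⟶ M) : Prop :=
  AddCat ω M ∧ ∀ M' : C, AddCat ω M' → ∀ g : X ⟶ M', ∃ h : M ⟶ M', f ≫ h = g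

lemma AddCat.eq_zero_of_src {M X : C} (hM : AddCat ω M)
    (hX : ∀ M' ∈ ω, ∀ f : M' ⟶ X, f = 0) (f : M ⟶ X) : f = 0 := by
  induction hM with
  | of h => exact hX _ h f
  | zero h => exact h.eq_of_src f 0
  | sum i₁ i₂ p₁ p₂ _ _ _ _ hZ _ _ ih₁ ih₂ =>
      rw [← id_comp f, ← hZ, Preadditive.add_comp, assoc, assoc, ih₁ (i₁ ≫ f), ih₂ (i₂ ≫ f),
        comp_zero, comp_zero, add_zero]
  | retract i r hir _ ih => rw [← id_comp f, ← hir, assoc, ih (r ≫ f), comp_zero]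

lemma AddCat.eq_zero_of_tgt {D : Type*} [Category D] [Preadditive D] (F : C ⥤ D) [F.Additive]
    {M : C} {X : D} (hM : AddCat ω M) (hX : ∀ M' ∈ ω, ∀ f : X ⟶ F.obj M', f = 0)
    (f : X ⟶ F.obj M) : f = 0 := by
  induction hM with
  | of h => exact hX _ h f
  | zero h => exact (F.map_isZero h).eq_of_tgt f 0
  | sum i₁ i₂ p₁ p₂ _ _ _ _ hZ _ _ ih₁ ih₂ =>
      rw [← comp_id f, ← F.map_id, ← hZ, F.map_add, F.map_comp, F.map_comp, Preadditive.comp_add,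
        ← assoc, ← assoc, ih₁ (f ≫ F.map p₁), ih₂ (f ≫ F.map p₂), zero_comp, zero_comp, add_zero]
  | retract i r hir _ ih =>
      rw [← comp_id f, ← F.map_id, ← hir, F.map_comp, ← assoc, ih (f ≫ F.map i), zero_comp]

end Preadditive

section Shift

variable {C : Type u} [Category.{v} C] [Preadditive C] [HasShift C ℤ] {ω : Set C}

lemma AddCat.mem_leftPerp (hω : SemiSelfOrth ω) {M : C} (hM : AddCat ω M) : M ∈ leftPerp ω :=
  fun M₀ hM₀ i hi => hM.eq_zero_of_src fun M₁ hM₁ => hω M₁ hM₁ M₀ hM₀ i hi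

lemma AddCat.mem_rightPerp [∀ n : ℤ, (shiftFunctor C n).Additive] (hω : SemiSelfOrth ω) {M : C}
    (hM : AddCat ω M) : M ∈ rightPerp ω :=
  fun M₀ hM₀ i hi => hM.eq_zero_of_tgt (shiftFunctor C i) fun M₁ hM₁ => hω M₀ hM₀ M₁ hM₁ i hi

end Shift

variable {C : Type u} [Category.{v} C] [Preadditive C] [HasZeroObject C]
  [HasShift C ℤ] [∀ n : ℤ, (shiftFunctor C n).Additive] [Pretriangulated C] {ω : Set C}

lemma mem_rightPerp_of_distTriang {T : Triangle C} (hT : T ∈ distTriang C)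
    (h₂ : T.obj₂ ∈ rightPerp ω) (h₃ : T.obj₃ ∈ rightPerp ω)
    (hmor₂ : ∀ M ∈ ω, ∀ x : M ⟶ T.obj₃, ∃ y : M ⟶ T.obj₂, y ≫ T.mor₂ = x) :
    T.obj₁ ∈ rightPerp ω := by
  intro M hM i hi φ
  obtain rfl | hi₁ : i = 1 ∨ 1 < i := by omega
  · obtain ⟨x, rfl⟩ := T.coyoneda_exact₁ hT φ (h₂ M hM 1 one_pos _)
    obtain ⟨y, rfl⟩ := hmor₂ M hM x
    rw [assoc, comp_distTriang_mor_zero₂₃ _ hT, comp_zero]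
  · let e : ∀ X : C, X⟦i - 1⟧⟦(1 : ℤ)⟧ ≅ X⟦i⟧ :=
      fun X => (shiftFunctorAdd' C (i - 1) 1 i (by omega)).symm.app X
    have h₂' : ∀ u : M ⟶ T.obj₂⟦i - 1⟧⟦(1 : ℤ)⟧, u = 0 := fun u =>
      (cancel_mono (e T.obj₂).hom).1 ((h₂ M hM i hi _).trans zero_comp.symm)
    obtain ⟨x, hx⟩ := Triangle.coyoneda_exact₁ _ (T.shift_distinguished hT (i - 1))
      (φ ≫ (e T.obj₁).inv) (h₂' _)
    have hφ : φ ≫ (e T.obj₁).inv = 0 :=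
      hx.trans (by rw [h₃ M hM (i - 1) (by omega) x]; exact zero_comp)
    exact (cancel_mono (e T.obj₁).inv).1 (hφ.trans zero_comp.symm)

lemma mem_leftPerp_of_distTriang {T : Triangle C} (hT : T ∈ distTriang C)
    (h₁ : T.obj₁ ∈ leftPerp ω) (h₂ : T.obj₂ ∈ leftPerp ω)
    (hmor₁ : ∀ M ∈ ω, ∀ x : T.obj₁ ⟶ M, ∃ y : T.obj₂ ⟶ M, T.mor₁ ≫ y = x) :
    T.obj₃ ∈ leftPerp ω := by
  intro M hM i hi φ
  obtain ⟨ψ, rfl⟩ := T.yoneda_exact₃ hT φ (h₂ M hM i hi _)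
  obtain rfl | hi₁ : i = 1 ∨ 1 < i := by omega
  · obtain ⟨x, rfl⟩ := (shiftFunctor C (1 : ℤ)).map_surjective ψ
    obtain ⟨y, rfl⟩ := hmor₁ M hM x
    rw [Functor.map_comp, comp_distTriang_mor_zero₃₁_assoc _ hT, zero_comp]
  · let e : M⟦i - 1⟧⟦(1 : ℤ)⟧ ≅ M⟦i⟧ := (shiftFunctorAdd' C (i - 1) 1 i (by omega)).symm.app M
    obtain ⟨x, hx⟩ := (shiftFunctor C (1 : ℤ)).map_surjective (ψ ≫ e.inv)
    have hψ : ψ ≫ e.inv = 0 := by rw [← hx, h₁ M hM (i - 1) (by omega) x, Functor.map_zero]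
    rw [← cancel_mono e.inv, assoc, hψ, comp_zero, zero_comp]

lemma exists_distTriang_of_isRightApprox (hω : SemiSelfOrth ω) {N M : C} (hN : N ∈ rightPerp ω)
    {g : M ⟶ N} (hg : IsRightApprox ω g) :
    ∃ (T' : C) (f : T' ⟶ M) (h : N ⟶ T'⟦(1 : ℤ)⟧),
      Triangle.mk f g h ∈ distTriang C ∧ T' ∈ rightPerp ω := by
  obtain ⟨T', f, h, hT⟩ := distinguished_cocone_triangle₁ g
  exact ⟨T', f, h, hT, mem_rightPerp_of_distTriang hT (hg.1.mem_rightPerp hω) hN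
    fun M₀ hM₀ x => hg.2 M₀ (.of hM₀) x⟩

lemma exists_distTriang_of_isLeftApprox (hω : SemiSelfOrth ω) {N M : C} (hN : N ∈ leftPerp ω)
    {f : N ⟶ M} (hf : IsLeftApprox ω f) :
    ∃ (T' : C) (g : M ⟶ T') (h : T' ⟶ N⟦(1 : ℤ)⟧),
      Triangle.mk f g h ∈ distTriang C ∧ T' ∈ leftPerp ω := by
  obtain ⟨T', g, h, hT⟩ := distinguished_cocone_triangle f
  exact ⟨T', g, h, hT, mem_leftPerp_of_distTriang hT hN (hf.1.mem_leftPerp hω)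
    fun M₀ hM₀ x => hf.2 M₀ (.of hM₀) x⟩

lemma rightPerp_subset_coAuslander (hω : SemiSelfOrth ω)
    (hright : ∀ X : C, ∃ (M : C) (f : M ⟶ X), IsRightApprox ω f) :
    rightPerp ω ⊆ coAuslander ω := by
  intro X hX
  have step : ∀ Y : {Y : C // Y ∈ rightPerp ω}, ∃ (T' : {Y : C // Y ∈ rightPerp ω}) (M : C)
      (f : T'.1 ⟶ M) (g : M ⟶ Y.1) (h : Y.1 ⟶ T'.1⟦(1 : ℤ)⟧),
      Triangle.mk f g h ∈ distTriang C ∧ AddCat ω M := by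
    rintro ⟨Y, hY⟩
    obtain ⟨M, g, hg⟩ := hright Y
    obtain ⟨T', f, h, hT, hT'⟩ := exists_distTriang_of_isRightApprox hω hY hg
    exact ⟨⟨T', hT'⟩, M, f, g, h, hT, hg.1⟩
  choose next M f g h hT hM using step
  let T : ℕ → {Y : C // Y ∈ rightPerp ω} := fun n => Nat.rec ⟨X, hX⟩ (fun _ => next) n
  exact ⟨fun n => (T n).1, fun n => M (T n), fun n => f (T n), fun n => g (T n),
    fun n => h (T n), rfl, fun n => hT (T n), fun n => hM (T n), fun n => (T n).2⟩

lemma leftPerp_subset_auslander (hω : SemiSelfOrth ω)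
    (hleft : ∀ X : C, ∃ (M : C) (f : X ⟶ M), IsLeftApprox ω f) :
    leftPerp ω ⊆ Auslander ω := by
  intro X hX
  have step : ∀ Y : {Y : C // Y ∈ leftPerp ω}, ∃ (T' : {Y : C // Y ∈ leftPerp ω}) (M : C)
      (f : Y.1 ⟶ M) (g : M ⟶ T'.1) (h : T'.1 ⟶ Y.1⟦(1 : ℤ)⟧),
      Triangle.mk f g h ∈ distTriang C ∧ AddCat ω M := by
    rintro ⟨Y, hY⟩
    obtain ⟨M, f, hf⟩ := hleft Y
    obtain ⟨T', g, h, hT, hT'⟩ := exists_distTriang_of_isLeftApprox hω hY hf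
    exact ⟨⟨T', hT'⟩, M, f, g, h, hT, hf.1⟩
  choose next M f g h hT hM using step
  let T : ℕ → {Y : C // Y ∈ leftPerp ω} := fun n => Nat.rec ⟨X, hX⟩ (fun _ => next) n
  exact ⟨fun n => (T n).1, fun n => M (T n), fun n => f (T n), fun n => g (T n),
    fun n => h (T n), rfl, fun n => hT (T n), fun n => hM (T n), fun n => (T n).2⟩

lemma coAuslander_subset_rightPerp : coAuslander ω ⊆ rightPerp ω := by
  rintro X ⟨T, -, -, -, -, rfl, -, -, hT⟩
  exact hT 0

lemma auslander_subset_leftPerp : Auslander ω ⊆ leftPerp ω := by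
  rintro X ⟨T, -, -, -, -, rfl, -, -, hT⟩
  exact hT 0

end RelSing

open RelSing

variable {C : Type u} [Category.{v} C] [Preadditive C] [HasZeroObject C]
  [HasShift C ℤ] [∀ n : ℤ, (shiftFunctor C n).Additive] [Pretriangulated C]

/-- If a semi-selforthogonal `ω` is functorially finite (every object has a left and a
right `add ω`-approximation), then `ω⊥ = ωX` and `⊥ω = X_ω`. -/
theorem stmt14 (ω : Set C) (hω : SemiSelfOrth ω)
    (hleft : ∀ X : C, ∃ (M : C) (f : X ⟶ M), AddCat ω M ∧
      ∀ M' : C, AddCat ω M' → ∀ g : X ⟶ M', ∃ h : M ⟶ M', f ≫ h = g)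
    (hright : ∀ X : C, ∃ (M : C) (f : M ⟶ X), AddCat ω M ∧
      ∀ M' : C, AddCat ω M' → ∀ g : M' ⟶ X, ∃ h : M' ⟶ M, h ≫ f = g) :
    rightPerp ω = coAuslander ω ∧ leftPerp ω = Auslander ω :=
  ⟨(rightPerp_subset_coAuslander hω hright).antisymm coAuslander_subset_rightPerp,
    (leftPerp_subset_auslander hω hleft).antisymm auslander_subset_leftPerp⟩
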